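/- arXiv:2512.21793 — 3 statements merged into one kernel-verified Lean document; each statement's English description precedes it below -/
import Mathlib

section
/- Let ᾱ > 2, ū > 0 and v ∈ (0, ū], let f be the uniform density on [0, ᾱ] and g the uniform density on [0, ū], and consider the power interference t(α,u) = α·u. Define Obj(w) := ∫₀^w g(u) ∫₀^ᾱ f(α)·(min(α·u, v) − u) dα du for w ∈ [0, v]. Then Obj attains its maximum on [0, v] at u_∞ = (v/2)·(1 + √(1 − 2/ᾱ)). -/
open MeasureTheory Set

noncomputable section

namespace Spectrum

/-- The CDF associated with a density via `F x = ∫ s in 0..x, f s`. -/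
def CDF (f : ℝ → ℝ) (x : ℝ) : ℝ := ∫ s in (0:ℝ)..x, f s

/-- `r u = (1 - G u) / g u - u`. -/
def rFun (g : ℝ → ℝ) (u : ℝ) : ℝ := (1 - CDF g u) / g u - u

/-- The lower threshold `K_low` on the cost of inspection. -/
def Klow (f g : ℝ → ℝ) (αstar : ℝ → ℝ) (v : ℝ) : ℝ :=
  (∫ u in (0:ℝ)..v, (1 - CDF f (αstar u)) * (1 - CDF g u - u * g u)) /
  (∫ u in (0:ℝ)..v, (1 - CDF f (αstar u)) * g u)

/-- `f` is a continuous, strictly positive probability density on `[0, b]`. -/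
structure IsDensityOn (f : ℝ → ℝ) (b : ℝ) : Prop where
  cont : ContinuousOn f (Icc 0 b)
  pos : ∀ x ∈ Icc (0:ℝ) b, 0 < f x
  supp : ∀ x, x ∉ Icc (0:ℝ) b → f x = 0
  int_one : (∫ x in (0:ℝ)..b, f x) = 1

/-- The regulator's objective. -/
def J (abar ubar v : ℝ) (f g : ℝ → ℝ) (t : ℝ → ℝ → ℝ) (a : ℝ → ℝ → ℝ) : ℝ :=
  ∫ u in (0:ℝ)..ubar, ∫ α in (0:ℝ)..abar, f α * g u * (min v (t α u) - u) * a α u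

/-- Feasibility of an allocation/inspection pair for the regulator's problem. -/
structure Feasible (abar ubar K : ℝ) (f g : ℝ → ℝ) (a c : ℝ → ℝ → ℝ) : Prop where
  meas_a : Measurable (Function.uncurry a)
  meas_c : Measurable (Function.uncurry c)
  mem_a : ∀ α u, a α u ∈ Icc (0:ℝ) 1
  mem_c : ∀ α u, c α u ∈ Icc (0:ℝ) 1
  budget : (∫ u in (0:ℝ)..ubar, ∫ α in (0:ℝ)..abar, f α * g u * rFun g u * a α u)
      = K * ∫ u in (0:ℝ)..ubar, ∫ α in (0:ℝ)..abar, f α * g u * c α u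
  ic : ∀ α u, a α u * (1 - c α u) ≤ a 0 u
  inspect : ∀ α u, c α u ≤ a α u
  u_mono : ∀ α u u', u' ≤ u → a α u ≤ a α u'
  α_mono0 : ∀ α u, a 0 u ≤ a α u

/-- Optimality for the regulator's problem. -/
def Optimal (abar ubar v K : ℝ) (f g : ℝ → ℝ) (t : ℝ → ℝ → ℝ) (a c : ℝ → ℝ → ℝ) : Prop :=
  Feasible abar ubar K f g a c ∧
  ∀ a' c' : ℝ → ℝ → ℝ, Feasible abar ubar K f g a' c' →
    J abar ubar v f g t a' ≤ J abar ubar v f g t a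

/-- The interference is `t(α,u) = α` (independent case, with `α*(u) = u`)
or `t(α,u) = α·u` (power case, with `α*(u) = 1`). -/
def InterferenceSpec (t : ℝ → ℝ → ℝ) (αstar : ℝ → ℝ) : Prop :=
  ((∀ α u, t α u = α) ∧ (∀ u, αstar u = u)) ∨
  ((∀ α u, t α u = α * u) ∧ (∀ u, αstar u = 1))

/-- The regulator's welfare from the `u`-threshold `w` with uniform densities and
power interference. -/
def ObjUnif (abar ubar v : ℝ) (w : ℝ) : ℝ :=
  ∫ u in (0:ℝ)..w, (1/ubar) * ∫ α in (0:ℝ)..abar, (1/abar) * (min (α * u) v - u)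

lemma int_linear' (a c d : ℝ) : ∫ x in (0:ℝ)..a, (c*x + d) = c*a^2/2 + d*a := by
  have h1 : IntervalIntegrable (fun x : ℝ => c*x) volume 0 a := by
    apply Continuous.intervalIntegrable; fun_prop
  rw [intervalIntegral.integral_add h1 (intervalIntegrable_const)]
  rw [intervalIntegral.integral_const_mul, integral_id]
  simp; ring

/-- inner welfare function -/
def Phi (abar v u : ℝ) : ℝ := ∫ α in (0:ℝ)..abar, (1/abar) * (min (α * u) v - u)

lemma phi_cont (abar v : ℝ) : Continuous (Phi abar v) := by
  apply intervalIntegral.continuous_parametric_intervalIntegral_of_continuous'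
  exact continuous_const.mul
    (((continuous_snd.mul continuous_fst).min continuous_const).sub continuous_fst)

lemma phi_integrand_ii (abar v u a b : ℝ) :
    IntervalIntegrable (fun α => (1/abar) * (min (α * u) v - u)) volume a b := by
  apply Continuous.intervalIntegrable
  exact continuous_const.mul
    (((continuous_id.mul continuous_const).min continuous_const).sub continuous_const)

lemma phi_low (abar v u : ℝ) (habar : 0 < abar) (hu : 0 ≤ u) (h : abar * u ≤ v) :
    Phi abar v u = u * (abar/2 - 1) := by
  have hcongr : EqOn (fun α => (1/abar) * (min (α * u) v - u))
      (fun α => (u/abar)*α + (-(u/abar))) (uIcc 0 abar) := by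
    intro α hα
    rw [uIcc_of_le habar.le] at hα
    have : α * u ≤ v := le_trans (by nlinarith [hα.1, hα.2]) h
    simp only [min_eq_left this]
    field_simp; ring
  rw [Phi, intervalIntegral.integral_congr hcongr, int_linear']
  field_simp; ring

lemma phi_high (abar v u : ℝ) (habar : 0 < abar) (hv : 0 < v) (h : v ≤ abar * u) :
    Phi abar v u = v - u - v^2/(2*abar*u) := by
  have hu : 0 < u := by nlinarith
  have hc0 : 0 < v/u := div_pos hv hu
  have hc1 : v/u ≤ abar := (div_le_iff₀ hu).2 (by linarith [h])
  rw [Phi, ← intervalIntegral.integral_add_adjacent_intervals (b := v/u)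
    (phi_integrand_ii abar v u 0 (v/u)) (phi_integrand_ii abar v u (v/u) abar)]
  have h1 : (∫ α in (0:ℝ)..(v/u), (1/abar) * (min (α * u) v - u))
      = (u/abar)*(v/u)^2/2 + (-(u/abar))*(v/u) := by
    rw [← int_linear']
    apply intervalIntegral.integral_congr
    intro α hα
    rw [uIcc_of_le hc0.le] at hα
    have : α * u ≤ v := by
      calc α * u ≤ (v/u) * u := by nlinarith [hα.1, hα.2]
      _ = v := by field_simp
    simp only [min_eq_left this]
    field_simp; ring
  have h2 : (∫ α in (v/u)..abar, (1/abar) * (min (α * u) v - u))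
      = (abar - v/u) • ((1/abar) * (v - u)) := by
    rw [← intervalIntegral.integral_const]
    apply intervalIntegral.integral_congr
    intro α hα
    rw [uIcc_of_le hc1] at hα
    have : v ≤ α * u := by
      calc v = (v/u) * u := by field_simp
      _ ≤ α * u := by nlinarith [hα.1]
    simp only [min_eq_right this]
  rw [h1, h2, smul_eq_mul]
  field_simp
  ring

set_option maxHeartbeats 1000000 in
/-- with uniform densities, `ᾱ > 2`, power interference, the welfare
`Obj` attains its maximum on `[0, v]` at `u_∞ = (v/2)(1 + √(1 - 2/ᾱ))`. -/
theorem power_uniform_threshold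
    (abar ubar v : ℝ) (habar : 2 < abar) (hubar : 0 < ubar)
    (hv : 0 < v) (hvubar : v ≤ ubar) :
    (v/2) * (1 + Real.sqrt (1 - 2/abar)) ∈ Icc (0:ℝ) v ∧
    ∀ w ∈ Icc (0:ℝ) v,
      ObjUnif abar ubar v w ≤ ObjUnif abar ubar v ((v/2) * (1 + Real.sqrt (1 - 2/abar))) := by
  have habar0 : (0:ℝ) < abar := by linarith
  set s : ℝ := Real.sqrt (1 - 2/abar) with hs_def
  have h2a : (0:ℝ) < 2/abar := by positivity
  have harg0 : (0:ℝ) ≤ 1 - 2/abar := by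
    have : 2/abar ≤ 1 := (div_le_one habar0).2 (by linarith)
    linarith
  have hs0 : 0 ≤ s := Real.sqrt_nonneg _
  have hs2 : s^2 = 1 - 2/abar := Real.sq_sqrt harg0
  have hs1 : s ≤ 1 := by nlinarith [sq_nonneg (s - 1)]
  have hs2' : abar * s^2 = abar - 2 := by rw [hs2]; field_simp
  have hkey : abar - 2 ≤ abar * s := by
    nlinarith [mul_nonneg (mul_nonneg habar0.le hs0) (sub_nonneg.2 hs1)]
  set uinf : ℝ := (v/2) * (1 + s) with huinf_def
  have huinf0 : 0 ≤ uinf := by positivity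
  have huinfv : uinf ≤ v := by nlinarith
  have huinf_half : v/2 ≤ uinf := by nlinarith
  have hs2'' : abar*(v*s)^2 = (abar - 2)*v^2 := by linear_combination v^2 * hs2'
  -- sign of Phi on the two sides of uinf
  have hpos : ∀ u ∈ Icc (0:ℝ) uinf, 0 ≤ Phi abar v u := by
    intro u hu
    obtain ⟨hu0, hu1⟩ := hu
    by_cases hcase : abar * u ≤ v
    · rw [phi_low abar v u habar0 hu0 hcase]
      nlinarith
    · push_neg at hcase
      rw [phi_high abar v u habar0 hv hcase.le]
      have hu' : 0 < u := by nlinarith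
      have hv2 : 0 ≤ v * (abar * s - abar + 2) :=
        mul_nonneg hv.le (by linarith)
      have h1 : 0 ≤ v*s + 2*u - v := by nlinarith [hv2, habar0, hcase]
      have h2 : 0 ≤ v*s - 2*u + v := by nlinarith [hu1]
      have key : v^2 ≤ 2*abar*u*(v-u) := by
        nlinarith [mul_nonneg habar0.le (mul_nonneg h2 h1), hs2'']
      have : v^2/(2*abar*u) ≤ v - u := (div_le_iff₀ (by positivity)).2 (by nlinarith)
      linarith
  have hneg : ∀ u ∈ Icc uinf v, Phi abar v u ≤ 0 := by
    intro u hu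
    obtain ⟨hu0, hu1⟩ := hu
    have hu' : 0 < u := by nlinarith
    have hcase : v ≤ abar * u := by
      nlinarith [mul_nonneg (by linarith : (0:ℝ) ≤ abar - 2) hu'.le]
    rw [phi_high abar v u habar0 hv hcase]
    have h1 : 0 ≤ 2*u - v - v*s := by nlinarith [hu0]
    have h2 : 0 ≤ 2*u - v + v*s := by nlinarith [mul_nonneg hv.le hs0]
    have key : 2*abar*u*(v-u) ≤ v^2 := by
      nlinarith [mul_nonneg habar0.le (mul_nonneg h1 h2), hs2'']
    have : v - u ≤ v^2/(2*abar*u) := (le_div_iff₀ (by positivity)).2 (by nlinarith)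
    linarith
  -- rewrite the objective via Phi
  have hObj : ∀ w, ObjUnif abar ubar v w = ∫ u in (0:ℝ)..w, (1/ubar) * Phi abar v u := by
    intro w; rfl
  have hii : ∀ a b : ℝ, IntervalIntegrable (fun u => (1/ubar) * Phi abar v u) volume a b :=
    fun a b => (continuous_const.mul (phi_cont abar v)).intervalIntegrable a b
  refine ⟨⟨huinf0, huinfv⟩, ?_⟩
  intro w hw
  obtain ⟨hw0, hw1⟩ := hw
  rw [hObj, hObj]
  rcases le_total w uinf with hcmp | hcmp
  · rw [← intervalIntegral.integral_add_adjacent_intervals (a := (0:ℝ)) (b := w) (c := uinf)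
      (hii 0 w) (hii w uinf)]
    have hnn : 0 ≤ ∫ u in w..uinf, (1/ubar) * Phi abar v u := by
      apply intervalIntegral.integral_nonneg hcmp
      intro u hu
      exact mul_nonneg (by positivity) (hpos u ⟨le_trans hw0 hu.1, hu.2⟩)
    linarith
  · rw [← intervalIntegral.integral_add_adjacent_intervals (a := (0:ℝ)) (b := uinf) (c := w)
      (hii 0 uinf) (hii uinf w)]
    have hnp : (∫ u in uinf..w, (1/ubar) * Phi abar v u) ≤ 0 := by
      rw [← neg_nonneg, ← intervalIntegral.integral_neg]
      apply intervalIntegral.integral_nonneg hcmp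
      intro u hu
      have h := hneg u ⟨hu.1, le_trans hu.2 hw1⟩
      have : (1/ubar) * Phi abar v u ≤ 0 :=
        mul_nonpos_of_nonneg_of_nonpos (by positivity) h
      linarith
    linarith


end Spectrum
end
end

section
/- Let (a°, c°) be an optimal pair of the regulator's problem with K ≥ K_low, and suppose u ∈ [0, ū] is such that a°(0, u) = 0. Then c°(α, u) = a°(α, u) for every α ∈ [0, ᾱ]: inspection occurs exactly when exclusive access is granted. -/
open MeasureTheory Set

noncomputable section

namespace Spectrum

/-- at an optimal pair, if `a°(0,u) = 0` then inspection occurs exactly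
when exclusive access is granted: `c°(α,u) = a°(α,u)` for every `α`. -/
theorem inspection_eq_allocation
    (abar ubar v K : ℝ) (habar : 0 < abar) (hubar : 0 < ubar) (hv : 0 < v) (hK0 : 0 ≤ K)
    (f g : ℝ → ℝ) (t : ℝ → ℝ → ℝ) (αstar : ℝ → ℝ)
    (hf : IsDensityOn f abar) (hg : IsDensityOn g ubar)
    (hr : StrictAntiOn (rFun g) (Icc 0 ubar))
    (ht : InterferenceSpec t αstar)
    (hK : Klow f g αstar v ≤ K)
    (a c : ℝ → ℝ → ℝ)
    (hopt : Optimal abar ubar v K f g t a c)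
    (hbin : ∀ α u, a α u = 0 ∨ a α u = 1)
    (u : ℝ) (hu : u ∈ Icc (0:ℝ) ubar) (h0 : a 0 u = 0) :
    ∀ α ∈ Icc (0:ℝ) abar, c α u = a α u := by
  intro α _
  obtain ⟨hfeas, -⟩ := hopt
  have hic := hfeas.ic α u
  have hins := hfeas.inspect α u
  have hc := hfeas.mem_c α u
  rcases hbin α u with h | h
  · rw [h]
    exact le_antisymm (h ▸ hins) hc.1
  · rw [h]
    rw [h0, h, one_mul] at hic
    linarith [hc.2]

end Spectrum
end
end

section
/- Fix 0 ≤ u_bot ≤ u_top ≤ v and suppose B := ∫_{u_bot}^{u_top} g(u)·(r(u) − K) du < 0 and C₀ := ∫₀^{u_bot} g(u)·r(u) du ≥ 0. For x ∈ [1, ᾱ] define O(x) := ∫_{u_bot}^{u_top} g(u) ∫_x^ᾱ f(α)·(min(v, α·u) − u) dα du and C(x) := C₀ + B·(F(ᾱ) − F(x)). Then O is strictly decreasing on (1, ᾱ], C is strictly increasing on [1, ᾱ], the feasible set {x ∈ [1, ᾱ] : C(x) ≥ 0} is nonempty, and the maximizer of O over this feasible set is x = 1 if C(1) ≥ 0,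 and otherwise is the unique x_c ∈ (1, ᾱ] satisfying F(x_c) = F(ᾱ) + C₀/B. -/
open MeasureTheory Set

noncomputable section

namespace Spectrum

/-- `C₀(u_bot) = ∫₀^{u_bot} g(u) r(u) du`. -/
def C0fun (g : ℝ → ℝ) (ubot : ℝ) : ℝ := ∫ u in (0:ℝ)..ubot, g u * rFun g u

/-- `B(u_bot, u_top) = ∫_{u_bot}^{u_top} g(u) (r(u) - K) du`. -/
def Bfun (g : ℝ → ℝ) (K ubot utop : ℝ) : ℝ := ∫ u in ubot..utop, g u * (rFun g u - K)

/-- The welfare of the intermediate region when exclusive access is granted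
exactly for `α ≥ x`. -/
def O18 (abar v : ℝ) (f g : ℝ → ℝ) (ubot utop x : ℝ) : ℝ :=
  ∫ u in ubot..utop, g u * ∫ α in x..abar, f α * (min v (α * u) - u)

/-- The net budget of that policy. -/
def C18 (abar : ℝ) (f g : ℝ → ℝ) (K ubot utop x : ℝ) : ℝ :=
  C0fun g ubot + Bfun g K ubot utop * (CDF f abar - CDF f x)

section Aux
variable {f g : ℝ → ℝ} {b abar ubar v : ℝ}

lemma IsDensityOn.nonneg (hf : IsDensityOn f b) (x : ℝ) : 0 ≤ f x := by
  by_cases h : x ∈ Icc (0:ℝ) b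
  · exact (hf.pos x h).le
  · rw [hf.supp x h]

lemma IsDensityOn.eq_indicator (hf : IsDensityOn f b) : f = (Icc (0:ℝ) b).indicator f := by
  funext x
  by_cases h : x ∈ Icc (0:ℝ) b
  · rw [Set.indicator_of_mem h]
  · rw [Set.indicator_of_notMem h, hf.supp x h]

lemma IsDensityOn.integrable (hf : IsDensityOn f b) : Integrable f (volume : Measure ℝ) := by
  rw [hf.eq_indicator, integrable_indicator_iff measurableSet_Icc]
  exact hf.cont.integrableOn_compact isCompact_Icc

lemma IsDensityOn.ii (hf : IsDensityOn f b) (p q : ℝ) : IntervalIntegrable f volume p q :=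
  hf.integrable.intervalIntegrable

lemma IsDensityOn.bound (hf : IsDensityOn f b) : ∃ M : ℝ, 0 ≤ M ∧ ∀ x, |f x| ≤ M := by
  obtain ⟨C, hC⟩ := isCompact_Icc.exists_bound_of_continuousOn hf.cont
  refine ⟨max C 0, le_max_right _ _, fun x => ?_⟩
  by_cases h : x ∈ Icc (0:ℝ) b
  · exact (hC x h).trans (le_max_left _ _)
  · rw [hf.supp x h]; simp

lemma cdf_split (hf : IsDensityOn f b) (p q : ℝ) :
    CDF f q = CDF f p + ∫ s in p..q, f s := by
  unfold CDF
  rw [intervalIntegral.integral_add_adjacent_intervals (hf.ii 0 p) (hf.ii p q)]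

lemma cdf_lt (hf : IsDensityOn f b) {p q : ℝ} (h0 : 0 ≤ p) (hpq : p < q) (hq : q ≤ b) :
    CDF f p < CDF f q := by
  have hpos : 0 < ∫ s in p..q, f s :=
    intervalIntegral.intervalIntegral_pos_of_pos_on (hf.ii p q)
      (fun x hx => hf.pos x ⟨h0.trans hx.1.le, hx.2.le.trans hq⟩) hpq
  have := cdf_split hf p q
  linarith

lemma cdf_cont (hf : IsDensityOn f b) : Continuous (CDF f) :=
  intervalIntegral.continuous_primitive (fun a b => hf.ii a b) 0

lemma cont_inner (hf : IsDensityOn f b) (v p q : ℝ) :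
    Continuous fun u : ℝ => ∫ α in p..q, f α * (min v (α * u) - u) := by
  obtain ⟨M, hM0, hM⟩ := hf.bound
  rw [continuous_iff_continuousAt]
  intro u₀
  set A : ℝ := max |p| |q| with hA
  have hA0 : 0 ≤ A := le_trans (abs_nonneg p) (le_max_left _ _)
  apply intervalIntegral.continuousAt_of_dominated_interval
    (bound := fun _ => M * (|v| + A * (|u₀| + 1) + (|u₀| + 1)))
  · refine Filter.Eventually.of_forall fun u => ?_
    exact (hf.integrable.aestronglyMeasurable.restrict).mul
      ((((continuous_const.min (continuous_mul_right u)).sub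
        continuous_const).aestronglyMeasurable).restrict)
  · filter_upwards [Metric.ball_mem_nhds u₀ one_pos] with u hu
    refine Filter.Eventually.of_forall fun α => fun hα => ?_
    have hu1 : |u| ≤ |u₀| + 1 := by
      have h1 := abs_sub_abs_le_abs_sub u u₀
      rw [Metric.mem_ball, Real.dist_eq] at hu
      linarith
    have hαA : |α| ≤ A := by
      rw [Set.uIoc_eq_union] at hα
      rcases hα with h | h
      · rw [abs_le]
        constructor
        · have := neg_abs_le p; have := h.1.le; linarith [le_max_left |p| |q|]
        · have := le_abs_self q; have := h.2; linarith [le_max_right |p| |q|]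
      · rw [abs_le]
        constructor
        · have := neg_abs_le q; have := h.1.le; linarith [le_max_right |p| |q|]
        · have := le_abs_self p; have := h.2; linarith [le_max_left |p| |q|]
    have key : |min v (α * u) - u| ≤ |v| + A * (|u₀| + 1) + (|u₀| + 1) := by
      have h1 : |min v (α * u) - u| ≤ |min v (α * u)| + |u| := abs_sub _ _
      have h2 : |min v (α * u)| ≤ max |v| |α * u| := abs_min_le_max_abs_abs
      have h3 : |α * u| ≤ A * (|u₀| + 1) := by
        rw [abs_mul]
        exact mul_le_mul hαA hu1 (abs_nonneg u) hA0
      have h4 : max |v| |α * u| ≤ |v| + A * (|u₀| + 1) := by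
        apply max_le
        · have : (0:ℝ) ≤ A * (|u₀| + 1) := mul_nonneg hA0 (by positivity)
          linarith
        · have := abs_nonneg v; linarith
      linarith
    calc ‖f α * (min v (α * u) - u)‖ = |f α| * |min v (α * u) - u| := abs_mul _ _
      _ ≤ M * (|v| + A * (|u₀| + 1) + (|u₀| + 1)) :=
        mul_le_mul (hM α) key (abs_nonneg _) hM0
  · exact intervalIntegrable_const
  · refine Filter.Eventually.of_forall fun α _ => ?_
    exact Continuous.continuousAt (continuous_const.mul
      ((continuous_const.min (continuous_mul_left α)).sub continuous_id))

lemma inner_ii (hf : IsDensityOn f abar) (v u p q : ℝ) :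
    IntervalIntegrable (fun α => f α * (min v (α * u) - u)) volume p q :=
  (hf.ii p q).mul_continuousOn (Continuous.continuousOn
    ((continuous_const.min (continuous_mul_right u)).sub continuous_const))

lemma outer_ii (hf : IsDensityOn f abar) (hg : IsDensityOn g ubar) (v p q c d : ℝ) :
    IntervalIntegrable (fun u => g u * ∫ α in p..q, f α * (min v (α * u) - u)) volume c d :=
  (hg.ii c d).mul_continuousOn (cont_inner hf v p q).continuousOn

lemma O18_eq_add (hf : IsDensityOn f abar) (hg : IsDensityOn g ubar)
    (ubot utop x y : ℝ) :
    O18 abar v f g ubot utop x =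
      (∫ u in ubot..utop, g u * ∫ α in x..y, f α * (min v (α * u) - u)) +
        O18 abar v f g ubot utop y := by
  unfold O18
  rw [← intervalIntegral.integral_add (outer_ii hf hg v x y ubot utop)
      (outer_ii hf hg v y abar ubot utop)]
  apply intervalIntegral.integral_congr
  intro u _
  simp only
  rw [← mul_add,
    intervalIntegral.integral_add_adjacent_intervals (inner_ii hf v u x y)
      (inner_ii hf v u y abar)]

lemma mid_nonneg (hf : IsDensityOn f abar) (hg : IsDensityOn g ubar)
    {ubot utop x y : ℝ} (h1 : 0 ≤ ubot) (h2 : ubot ≤ utop) (h3 : utop ≤ v)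
    (hx : 1 ≤ x) (hxy : x ≤ y) :
    0 ≤ ∫ u in ubot..utop, g u * ∫ α in x..y, f α * (min v (α * u) - u) := by
  apply intervalIntegral.integral_nonneg h2
  intro u hu
  apply mul_nonneg (hg.nonneg u)
  apply intervalIntegral.integral_nonneg hxy
  intro α hα
  apply mul_nonneg (hf.nonneg α)
  have hu0 : 0 ≤ u := h1.trans hu.1
  have huv : u ≤ v := hu.2.trans h3
  have hαu : u ≤ α * u := le_mul_of_one_le_left hu0 (hx.trans hα.1)
  simp only [sub_nonneg, le_min_iff]
  exact ⟨huv, hαu⟩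

lemma mid_pos (hf : IsDensityOn f abar) (hg : IsDensityOn g ubar)
    {ubot utop x y : ℝ} (h1 : 0 ≤ ubot) (h3 : utop ≤ v)
    (hbu : ubot < utop) (hbb : ubot < ubar)
    (hx : 1 < x) (hxy : x < y) (hy : y ≤ abar) :
    0 < ∫ u in ubot..utop, g u * ∫ α in x..y, f α * (min v (α * u) - u) := by
  set t := min utop ubar with ht
  have htb : ubot < t := lt_min hbu hbb
  rw [← intervalIntegral.integral_add_adjacent_intervals
    (outer_ii hf hg v x y ubot t) (outer_ii hf hg v x y t utop)]
  have hpos : 0 < ∫ u in ubot..t, g u * ∫ α in x..y, f α * (min v (α * u) - u) := by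
    apply intervalIntegral.intervalIntegral_pos_of_pos_on (outer_ii hf hg v x y ubot t) _ htb
    intro u hu
    have hu0 : 0 < u := lt_of_le_of_lt h1 hu.1
    have huu : u ≤ ubar := (hu.2.trans_le (min_le_right _ _)).le
    have huv : u < v := lt_of_lt_of_le (hu.2.trans_le (min_le_left _ _)) h3
    apply mul_pos (hg.pos u ⟨hu0.le, huu⟩)
    apply intervalIntegral.intervalIntegral_pos_of_pos_on (inner_ii hf v u x y) _ hxy
    intro α hα
    have hα1 : 1 < α := hx.trans hα.1
    apply mul_pos (hf.pos α ⟨by linarith [hα.1], hα.2.le.trans hy⟩)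
    have hαu : u < α * u := by nlinarith
    simp only [sub_pos, lt_min_iff]
    exact ⟨huv, hαu⟩
  have hnn : 0 ≤ ∫ u in t..utop, g u * ∫ α in x..y, f α * (min v (α * u) - u) := by
    apply intervalIntegral.integral_nonneg (min_le_left _ _)
    intro u hu
    apply mul_nonneg (hg.nonneg u)
    apply intervalIntegral.integral_nonneg hxy.le
    intro α hα
    apply mul_nonneg (hf.nonneg α)
    have hu0 : 0 ≤ u := le_trans (le_trans h1 htb.le) hu.1
    have huv : u ≤ v := hu.2.trans h3
    have hαu : u ≤ α * u := le_mul_of_one_le_left hu0 (hx.le.trans hα.1)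
    simp only [sub_nonneg, le_min_iff]
    exact ⟨huv, hαu⟩
  linarith

end Aux

/-- for fixed cutoffs with `B < 0 ≤ C₀`, `O` is strictly decreasing on
`(1, ᾱ]`, `C` is strictly increasing on `[1, ᾱ]`, the feasible set is nonempty, and
the maximizer of `O` over the feasible set is `1` if `C(1) ≥ 0`, and otherwise the
unique `x_c ∈ (1, ᾱ]` with `F(x_c) = F(ᾱ) + C₀/B`. -/
theorem alpha_cutoff_characterization
    (abar ubar v K : ℝ) (habar : 1 < abar) (hubar : 0 < ubar) (hv : 0 < v) (hK0 : 0 ≤ K)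
    (f g : ℝ → ℝ)
    (hf : IsDensityOn f abar) (hg : IsDensityOn g ubar)
    (ubot utop : ℝ) (h1 : 0 ≤ ubot) (h2 : ubot ≤ utop) (h3 : utop ≤ v)
    (hB : Bfun g K ubot utop < 0) (hC0 : 0 ≤ C0fun g ubot) :
    StrictAntiOn (O18 abar v f g ubot utop) (Ioc 1 abar) ∧
    StrictMonoOn (C18 abar f g K ubot utop) (Icc 1 abar) ∧
    (∃ x ∈ Icc (1:ℝ) abar, 0 ≤ C18 abar f g K ubot utop x) ∧
    (0 ≤ C18 abar f g K ubot utop 1 →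
      ∀ x ∈ Icc (1:ℝ) abar, 0 ≤ C18 abar f g K ubot utop x →
        O18 abar v f g ubot utop x ≤ O18 abar v f g ubot utop 1) ∧
    (C18 abar f g K ubot utop 1 < 0 →
      ∃ xc ∈ Ioc (1:ℝ) abar,
        CDF f xc = CDF f abar + C0fun g ubot / Bfun g K ubot utop ∧
        (∀ y ∈ Ioc (1:ℝ) abar,
          CDF f y = CDF f abar + C0fun g ubot / Bfun g K ubot utop → y = xc) ∧
        0 ≤ C18 abar f g K ubot utop xc ∧
        ∀ x ∈ Icc (1:ℝ) abar, 0 ≤ C18 abar f g K ubot utop x →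
          O18 abar v f g ubot utop x ≤ O18 abar v f g ubot utop xc) := by

  -- Basic consequences of `hB`.
  have hbu : ubot < utop := by
    rcases lt_or_eq_of_le h2 with h | h
    · exact h
    · exfalso
      rw [← h] at hB
      unfold Bfun at hB
      rw [intervalIntegral.integral_same] at hB
      linarith
  have hbb : ubot < ubar := by
    by_contra hcon
    push_neg at hcon
    have hzero : EqOn (fun u => g u * (rFun g u - K)) (fun _ => (0:ℝ)) (Ioc ubot utop) := by
      intro u hu
      have hg0 : g u = 0 := hg.supp u (by
        simp only [mem_Icc, not_and_or]
        right
        push_neg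
        linarith [hu.1])
      simp [hg0]
    have hBz : Bfun g K ubot utop = 0 := by
      unfold Bfun
      rw [intervalIntegral.integral_of_le hbu.le,
        MeasureTheory.setIntegral_congr_fun measurableSet_Ioc hzero]
      simp
    linarith
  -- Comparison lemmas for `O18`.
  have hOle : ∀ x y : ℝ, 1 ≤ x → x ≤ y → y ≤ abar →
      O18 abar v f g ubot utop y ≤ O18 abar v f g ubot utop x := by
    intro x y hx hxy hy
    rw [O18_eq_add hf hg ubot utop x y]
    linarith [mid_nonneg hf hg h1 h2 h3 hx hxy]
  have hOlt : ∀ x y : ℝ, 1 < x → x < y → y ≤ abar →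
      O18 abar v f g ubot utop y < O18 abar v f g ubot utop x := by
    intro x y hx hxy hy
    rw [O18_eq_add hf hg ubot utop x y]
    linarith [mid_pos hf hg h1 h3 hbu hbb hx hxy hy]
  refine ⟨?_, ?_, ?_, ?_, ?_⟩
  · -- O18 strictly decreasing on Ioc 1 abar
    intro x hx y hy hxy
    exact hOlt x y hx.1 hxy hy.2
  · -- C18 strictly increasing on Icc 1 abar
    intro x hx y hy hxy
    unfold C18
    have hF : CDF f x < CDF f y := cdf_lt hf (by linarith [hx.1]) hxy hy.2
    have hprod : Bfun g K ubot utop * (CDF f y - CDF f x) < 0 :=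
      mul_neg_of_neg_of_pos hB (sub_pos.2 hF)
    nlinarith [hprod]
  · -- feasible set nonempty
    refine ⟨abar, ⟨habar.le, le_refl _⟩, ?_⟩
    unfold C18
    rw [sub_self, mul_zero, add_zero]
    exact hC0
  · -- C18 1 ≥ 0 case
    intro _ x hx _
    exact hOle 1 x le_rfl hx.1 hx.2
  · -- C18 1 < 0 case
    intro hC1
    have hBne : Bfun g K ubot utop ≠ 0 := ne_of_lt hB
    unfold C18 at hC1
    have hT1 : CDF f 1 < CDF f abar + C0fun g ubot / Bfun g K ubot utop := by
      rw [← sub_lt_iff_lt_add', lt_div_iff_of_neg hB]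
      nlinarith [hC1]
    have hT2 : CDF f abar + C0fun g ubot / Bfun g K ubot utop ≤ CDF f abar := by
      have : C0fun g ubot / Bfun g K ubot utop ≤ 0 :=
        div_nonpos_iff.mpr (Or.inl ⟨hC0, hB.le⟩)
      linarith
    obtain ⟨xc, hxcmem, hFxc⟩ := intermediate_value_Icc habar.le
      ((cdf_cont hf).continuousOn) ⟨hT1.le, hT2⟩
    have hxc1 : 1 < xc := by
      rcases lt_or_eq_of_le hxcmem.1 with h | h
      · exact h
      · exfalso
        rw [← h] at hFxc
        linarith [hT1, hFxc.le, hFxc.ge]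
    refine ⟨xc, ⟨hxc1, hxcmem.2⟩, hFxc, ?_, ?_, ?_⟩
    · -- uniqueness
      intro y hy hFy
      rcases lt_trichotomy y xc with h | h | h
      · exfalso
        have := cdf_lt hf (by linarith [hy.1]) h hxcmem.2
        rw [hFy, hFxc] at this
        linarith
      · exact h
      · exfalso
        have := cdf_lt hf (by linarith [hxc1]) h hy.2
        rw [hFy, hFxc] at this
        linarith
    · -- feasibility of xc
      unfold C18
      rw [hFxc]
      have : C0fun g ubot + Bfun g K ubot utop *
          (CDF f abar - (CDF f abar + C0fun g ubot / Bfun g K ubot utop)) = 0 := by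
        field_simp
        ring
      linarith [this]
    · -- maximality
      intro x hx hCx
      unfold C18 at hCx
      have hFge : CDF f xc ≤ CDF f x := by
        rw [hFxc, ← le_sub_iff_add_le', div_le_iff_of_neg hB]
        nlinarith [hCx]
      have hxcx : xc ≤ x := by
        by_contra hcon
        push_neg at hcon
        have := cdf_lt hf (by linarith [hx.1]) hcon hxcmem.2
        linarith
      exact hOle xc x hxc1.le hxcx hx.2


end Spectrum
end
end
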